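/- arXiv:2403.08924 — 2 statements merged into one kernel-verified Lean document; each statement's English description precedes it below -/
import Mathlib

section
/- Let q ∈ [1,2]. For every t ∈ [−1, +∞), one has (1+t)^q ≤ (1 + qt/2)². Equivalently, the function t ↦ (1+t)^q − (1+qt/2)² is nonpositive on [−1,+∞). -/
open Real

/-- For `q ∈ [1,2]` and every `t ∈ [−1,∞)`, `(1+t)^q ≤ (1 + qt/2)²`,
i.e. the function `t ↦ (1+t)^q − (1+qt/2)²` is nonpositive on `[−1,∞)`. -/
theorem stmt_4 (q : ℝ) (hq : q ∈ Set.Icc (1 : ℝ) 2) :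
    ∀ t : ℝ, -1 ≤ t → (1 + t) ^ q - (1 + q * t / 2) ^ 2 ≤ 0 := by
  obtain ⟨hq1, hq2⟩ := hq
  intro t ht
  have h1 : (0:ℝ) ≤ 1 + t := by linarith
  have hb : (1 + t) ^ (q / 2) ≤ 1 + (q / 2) * t :=
    rpow_one_add_le_one_add_mul_self ht (by linarith) (by linarith)
  have hnn : (0:ℝ) ≤ 1 + q * t / 2 := by nlinarith
  have key : (1 + t) ^ q = ((1 + t) ^ (q / 2)) ^ 2 := by
    rw [← rpow_natCast ((1+t) ^ (q/2)) 2, ← rpow_mul h1]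
    norm_num
  have hpow : ((1 + t) ^ (q / 2)) ^ 2 ≤ (1 + q * t / 2) ^ 2 := by
    apply sq_le_sq' _ _
    · nlinarith [rpow_nonneg h1 (q/2)]
    · calc (1 + t) ^ (q / 2) ≤ 1 + (q / 2) * t := hb
        _ = 1 + q * t / 2 := by ring
  nlinarith [key, hpow]
end

section
/- Let Σ := {x ∈ ℝ³ : x₁ = x₂ = 0} and let A ∈ C¹(ℝ³\Σ, ℝ³) be of the form A = A_τ + A_ρ + A_ζ with A_τ(x) = α(r,x₃)(−x₂,x₁,0), A_ρ(x) = β(r,x₃)(x₁,x₂,0), A_ζ(x) = γ(r,x₃)(0,0,1), where α,β,γ : (0,∞)×ℝ → ℝ are C¹ and r = √(x₁²+x₂²). Then on ℝ³\Σ one has |∇A|² = |∇A_τ|² + |∇A_ρ|² + |∇A_ζ|², and the curls satisfy the pointwise orthogonality relations (∇×A_ρ)·(∇×A_τ) = 0 and (∇×A_τ)·(∇×A_ζ) = 0. -/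
open MeasureTheory Filter Topology Real

noncomputable section

abbrev V3 := EuclideanSpace ℝ (Fin 3)

/-- The axis `Σ = {x ∈ ℝ³ : x₁ = x₂ = 0}`. -/
def axisSet : Set V3 := {x | x 0 = 0 ∧ x 1 = 0}

/-- `r(x) = √(x₁² + x₂²)`. -/
def rcyl (x : V3) : ℝ := Real.sqrt ((x 0) ^ 2 + (x 1) ^ 2)

/-- The tangential direction `(−x₂, x₁, 0)`. -/
def vtau (x : V3) : V3 := (WithLp.equiv 2 (Fin 3 → ℝ)).symm ![-(x 1), x 0, 0]

/-- The radial direction `(x₁, x₂, 0)`. -/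
def vrho (x : V3) : V3 := (WithLp.equiv 2 (Fin 3 → ℝ)).symm ![x 0, x 1, 0]

/-- The vertical direction `(0, 0, 1)`. -/
def vzeta : V3 := (WithLp.equiv 2 (Fin 3 → ℝ)).symm ![0, 0, 1]

/-- The squared Frobenius norm `|∇A|²` of the Jacobian of a vector field `A`. -/
def frob2 (A : V3 → V3) (x : V3) : ℝ :=
  ∑ i : Fin 3, ∑ j : Fin 3,
    (fderiv ℝ (fun y => A y i) x (EuclideanSpace.single j 1)) ^ 2

/-- The (pointwise) curl of a vector field on `ℝ³`. -/
def curl3 (A : V3 → V3) (x : V3) : V3 :=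
  (WithLp.equiv 2 (Fin 3 → ℝ)).symm
    ![fderiv ℝ (fun y => A y 2) x (EuclideanSpace.single 1 1) -
        fderiv ℝ (fun y => A y 1) x (EuclideanSpace.single 2 1),
      fderiv ℝ (fun y => A y 0) x (EuclideanSpace.single 2 1) -
        fderiv ℝ (fun y => A y 2) x (EuclideanSpace.single 0 1),
      fderiv ℝ (fun y => A y 1) x (EuclideanSpace.single 0 1) -
        fderiv ℝ (fun y => A y 0) x (EuclideanSpace.single 1 1)]


/-!
Each coefficient `f = g(r, x₃)` is invariant under rotations about the axis, so its gradient is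
annihilated by the rotation generator `vtau x = (−x₂, x₁, 0)`: `x₁ ∂₂f = x₂ ∂₁f`. Writing out the
Jacobians of the three fields, the Frobenius cross term of `A_τ` and `A_ρ` and both curl inner
products are multiples of these quantities, while the cross terms with `A_ζ` vanish because `A_ζ`
is vertical and `A_τ`, `A_ρ` are horizontal.
-/

open EuclideanSpace

lemma ContDiffOn.differentiableAt_of_fst_pos {F : Type*} [NormedAddCommGroup F]
    [NormedSpace ℝ F] {n : WithTop ℕ∞} {G : ℝ × ℝ → F}
    (hG : ContDiffOn ℝ n G (Set.Ioi 0 ×ˢ Set.univ)) (hn : n ≠ 0) {p : ℝ × ℝ} (hp : 0 < p.1) :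
    DifferentiableAt ℝ G p :=
  (hG.contDiffAt ((isOpen_Ioi.prod isOpen_univ).mem_nhds ⟨hp, trivial⟩)).differentiableAt hn

def vtauCLM : V3 →L[ℝ] V3 :=
  LinearMap.toContinuousLinearMap
    { toFun := vtau
      map_add' := fun y z => by ext i; fin_cases i <;> simp [vtau, add_comm]
      map_smul' := fun c y => by ext i; fin_cases i <;> simp [vtau] }

def vrhoCLM : V3 →L[ℝ] V3 :=
  LinearMap.toContinuousLinearMap
    { toFun := vrho
      map_add' := fun y z => by ext i; fin_cases i <;> simp [vrho]
      map_smul' := fun c y => by ext i; fin_cases i <;> simp [vrho] }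

lemma apply_vtau (D : V3 →L[ℝ] ℝ) (x : V3) :
    D (vtau x) = x 0 * D (single 1 1) - x 1 * D (single 0 1) := by
  have hvtau : vtau x = x 0 • single 1 1 - x 1 • single 0 1 := by
    ext i; fin_cases i <;> simp [vtau]
  rw [hvtau, map_sub, map_smul, map_smul, smul_eq_mul, smul_eq_mul]

section

variable {x : V3}

lemma hasFDerivAt_vtau : HasFDerivAt vtau vtauCLM x := vtauCLM.hasFDerivAt

lemma hasFDerivAt_vrho : HasFDerivAt vrho vrhoCLM x := vrhoCLM.hasFDerivAt

lemma rcyl_pos (hx : x ∉ axisSet) : 0 < rcyl x := by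
  refine Real.sqrt_pos.2 ?_
  rcases not_and_or.1 hx with h | h <;> positivity

lemma hasFDerivAt_rcyl (hx : x ∉ axisSet) :
    HasFDerivAt rcyl ((rcyl x)⁻¹ • (x 0 • proj 0 + x 1 • proj 1 : V3 →L[ℝ] ℝ)) x := by
  have hq := ((PiLp.hasFDerivAt_apply (𝕜 := ℝ) 2 x 0).pow 2).add
    ((PiLp.hasFDerivAt_apply (𝕜 := ℝ) 2 x 1).pow 2)
  have hsqrt := Real.hasDerivAt_sqrt (Real.sqrt_pos.1 (rcyl_pos hx)).ne'
  refine (hsqrt.comp_hasFDerivAt x hq).congr_fderiv ?_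
  ext v
  simp only [one_div, mul_inv_rev, Nat.add_one_sub_one, pow_one, nsmul_eq_mul, Nat.cast_ofNat,
    smul_add, add_apply, smul_apply, PiLp.proj_apply, smul_eq_mul, rcyl]
  ring

lemma fderiv_rcyl_vtau (hx : x ∉ axisSet) : fderiv ℝ rcyl x (vtau x) = 0 := by
  rw [(hasFDerivAt_rcyl hx).fderiv]
  simp only [vtau, WithLp.equiv_symm_apply, add_apply, smul_apply, PiLp.proj_apply,
    Matrix.cons_val_zero, Matrix.cons_val_one, smul_eq_mul]
  ring

variable {g : ℝ → ℝ → ℝ}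

lemma hasFDerivAt_comp_rcyl {g' : ℝ × ℝ →L[ℝ] ℝ}
    (hg : HasFDerivAt (fun p : ℝ × ℝ => g p.1 p.2) g' (rcyl x, x 2)) (hx : x ∉ axisSet) :
    HasFDerivAt (fun y => g (rcyl y) (y 2))
      (g'.comp ((fderiv ℝ rcyl x).prod (proj 2 : V3 →L[ℝ] ℝ))) x :=
  HasFDerivAt.comp (g := fun p : ℝ × ℝ => g p.1 p.2) (f := fun y => (rcyl y, y 2)) x hg
    ((hasFDerivAt_rcyl hx).differentiableAt.hasFDerivAt.prodMk (PiLp.hasFDerivAt_apply 2 x 2))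

lemma differentiableAt_comp_rcyl
    (hg : DifferentiableAt ℝ (fun p : ℝ × ℝ => g p.1 p.2) (rcyl x, x 2)) (hx : x ∉ axisSet) :
    DifferentiableAt ℝ (fun y => g (rcyl y) (y 2)) x :=
  (hasFDerivAt_comp_rcyl hg.hasFDerivAt hx).differentiableAt

lemma fderiv_comp_rcyl_vtau
    (hg : DifferentiableAt ℝ (fun p : ℝ × ℝ => g p.1 p.2) (rcyl x, x 2)) (hx : x ∉ axisSet) :
    fderiv ℝ (fun y => g (rcyl y) (y 2)) x (vtau x) = 0 := by
  rw [(hasFDerivAt_comp_rcyl hg.hasFDerivAt hx).fderiv, ContinuousLinearMap.comp_apply,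
    ContinuousLinearMap.prod_apply, fderiv_rcyl_vtau hx]
  simp [vtau, Prod.mk_zero_zero]

variable {A : V3 → V3} {A' : V3 →L[ℝ] V3}

lemma HasFDerivAt.fderiv_apply_component (h : HasFDerivAt A A' x) (i : Fin 3) (v : V3) :
    fderiv ℝ (fun y => A y i) x v = A' v i :=
  congrArg (· v) ((PiLp.proj 2 (fun _ : Fin 3 => ℝ) i).hasFDerivAt.comp x h).fderiv

lemma frob2_eq_of_hasFDerivAt (h : HasFDerivAt A A' x) :
    frob2 A x = ∑ i : Fin 3, ∑ j : Fin 3, (A' (single j 1) i) ^ 2 := by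
  simp only [frob2, h.fderiv_apply_component]

lemma curl3_eq_of_hasFDerivAt (h : HasFDerivAt A A' x) :
    curl3 A x = (WithLp.equiv 2 (Fin 3 → ℝ)).symm
      ![A' (single 1 1) 2 - A' (single 2 1) 1, A' (single 2 1) 0 - A' (single 0 1) 2,
        A' (single 0 1) 1 - A' (single 1 1) 0] := by
  simp only [curl3, h.fderiv_apply_component]

end

/-- If `A = A_τ + A_ρ + A_ζ` on `ℝ³\Σ` with cylindrical components given
by `C¹` coefficients `α, β, γ : (0,∞)×ℝ → ℝ`, then on `ℝ³\Σ` one has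
`|∇A|² = |∇A_τ|² + |∇A_ρ|² + |∇A_ζ|²`, `(∇×A_ρ)·(∇×A_τ) = 0` and
`(∇×A_τ)·(∇×A_ζ) = 0`. -/
theorem stmt_13 (α β γ : ℝ → ℝ → ℝ)
    (hα : ContDiffOn ℝ 1 (fun p : ℝ × ℝ => α p.1 p.2) (Set.Ioi 0 ×ˢ Set.univ))
    (hβ : ContDiffOn ℝ 1 (fun p : ℝ × ℝ => β p.1 p.2) (Set.Ioi 0 ×ˢ Set.univ))
    (hγ : ContDiffOn ℝ 1 (fun p : ℝ × ℝ => γ p.1 p.2) (Set.Ioi 0 ×ˢ Set.univ)) :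
    ∀ x ∉ axisSet,
      frob2 (fun y => α (rcyl y) (y 2) • vtau y + β (rcyl y) (y 2) • vrho y +
          γ (rcyl y) (y 2) • vzeta) x =
        frob2 (fun y => α (rcyl y) (y 2) • vtau y) x +
          frob2 (fun y => β (rcyl y) (y 2) • vrho y) x +
          frob2 (fun y => γ (rcyl y) (y 2) • vzeta) x ∧
      (inner ℝ (curl3 (fun y => β (rcyl y) (y 2) • vrho y) x)
        (curl3 (fun y => α (rcyl y) (y 2) • vtau y) x) : ℝ) = 0 ∧
      (inner ℝ (curl3 (fun y => α (rcyl y) (y 2) • vtau y) x)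
        (curl3 (fun y => γ (rcyl y) (y 2) • vzeta) x) : ℝ) = 0 := by
  intro x hx
  have hr : 0 < (rcyl x, x 2).1 := rcyl_pos hx
  have hα' := hα.differentiableAt_of_fst_pos one_ne_zero hr
  have hβ' := hβ.differentiableAt_of_fst_pos one_ne_zero hr
  have hγ' := hγ.differentiableAt_of_fst_pos one_ne_zero hr
  have hτ := (differentiableAt_comp_rcyl hα' hx).hasFDerivAt.fun_smul hasFDerivAt_vtau
  have hρ := (differentiableAt_comp_rcyl hβ' hx).hasFDerivAt.fun_smul hasFDerivAt_vrho
  have hζ := (differentiableAt_comp_rcyl hγ' hx).hasFDerivAt.smul_const vzeta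
  have ha := fderiv_comp_rcyl_vtau hα' hx
  have hb := fderiv_comp_rcyl_vtau hβ' hx
  have hc := fderiv_comp_rcyl_vtau hγ' hx
  rw [apply_vtau] at ha hb hc
  rw [frob2_eq_of_hasFDerivAt ((hτ.fun_add hρ).fun_add hζ), frob2_eq_of_hasFDerivAt hτ,
    frob2_eq_of_hasFDerivAt hρ, frob2_eq_of_hasFDerivAt hζ, curl3_eq_of_hasFDerivAt hτ,
    curl3_eq_of_hasFDerivAt hρ, curl3_eq_of_hasFDerivAt hζ]
  simp only [Fin.sum_univ_three, PiLp.inner_apply, RCLike.inner_apply, conj_trivial, vtauCLM,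
    vrhoCLM, LinearMap.coe_toContinuousLinearMap', LinearMap.coe_mk, AddHom.coe_mk, vtau, vrho,
    vzeta, WithLp.equiv_symm_apply, add_apply, smul_apply, ContinuousLinearMap.smulRight_apply,
    PiLp.add_apply, PiLp.smul_apply, PiLp.single_apply, smul_eq_mul, Matrix.cons_val,
    Fin.reduceEq, ↓reduceIte]
  set Dα := fderiv ℝ (fun y => α (rcyl y) (y 2)) x
  refine ⟨?_, ?_, ?_⟩
  · linear_combination 2 * β (rcyl x) (x 2) * ha - 2 * α (rcyl x) (x 2) * hb
  · linear_combination
      -(2 * α (rcyl x) (x 2) + x 0 * Dα (single 0 1) + x 1 * Dα (single 1 1)) * hb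
  · linear_combination -Dα (single 2 1) * hc
end
end
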